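/- The yes/no model Fyn is fairly terminating: every fair run of Fyn is finite. -/

import Mathlib

/-- The two roles of the yes/no model. -/
inductive YNRole where
  | yes
  | no
deriving DecidableEq

/-- States of the yes/no model `Fyn`: `(m, b, Ye, Ne)`, where Boolean `1` is `true` and
`0` is `false`. -/
abbrev FynState := ℕ × Bool × Bool × Bool

/-- Enabled roles of `Fyn`: `Yes` is enabled iff `Ye = 1`, `No` is enabled iff `Ne = 1`. -/
def FynER : FynState → Finset YNRole := fun s =>
  (if s.2.2.1 = true then {YNRole.yes} else ∅) ∪ (if s.2.2.2 = true then {YNRole.no} else ∅)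

/-- The transitions of the yes/no model `Fyn`. -/
inductive FynStep : FynState → YNRole → FynState → Prop where
  | r1 (m : ℕ) (h : 0 < m) :
      FynStep (m, true, true, true) YNRole.yes (m, false, true, true)
  | r2 (m : ℕ) (h : 0 < m) :
      FynStep (m, false, true, true) YNRole.yes (m, false, true, true)
  | r3 (m : ℕ) (h : 0 < m) :
      FynStep (m, false, true, true) YNRole.no (m - 1, true, true, true)
  | r4 (m : ℕ) :
      FynStep (m, true, true, true) YNRole.no (m, true, true, true)
  | r5 :
      FynStep (1, false, false, true) YNRole.no (0, true, false, true)
  | r6 (m : ℕ) (b Ne : Bool) (h : m ≤ 1) :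
      FynStep (m, b, true, Ne) YNRole.yes (m, b, false, Ne)
  | r7 (b Ye : Bool) :
      FynStep (0, b, Ye, true) YNRole.no (0, b, Ye, false)

/-!
The potential `2 * (m + Ye + Ne) + b` never increases along a transition, and it is preserved
only by the self-loops `r2` and `r4`. On an infinite run it is eventually constant, so the run
eventually sits in one state `(m, b, 1, 1)` forever, always taking the same self-loop: `Yes`
if `b = 0`, `No` if `b = 1`. The other role stays enabled and is never taken, so the run is
not fair.
-/

def fynPotential (s : FynState) : ℕ :=
  2 * (s.1 + s.2.2.1.toNat + s.2.2.2.toNat) + s.2.1.toNat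

namespace FynStep

variable {s s' : FynState} {ρ : YNRole}

theorem potential_le (h : FynStep s ρ s') : fynPotential s' ≤ fynPotential s := by
  cases h <;> grind [fynPotential]

theorem eq_of_potential_eq (h : FynStep s ρ s') (hp : fynPotential s' = fynPotential s) :
    s' = s ∧ s.2.2 = (true, true) ∧ ρ = cond s.2.1 .no .yes := by
  cases h <;> grind [fynPotential]

end FynStep

/-- The yes/no model `Fyn` is fairly terminating: every fair run is finite, i.e., there is
no fair infinite run (finite runs are always fair). An infinite run is a sequence of
consecutive labeled transitions; it is fair if every role enabled at any point is
eventually taken. -/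
theorem fyn_fairly_terminating :
    ∀ (st : ℕ → FynState) (lb : ℕ → YNRole),
      (∀ n, FynStep (st n) (lb n) (st (n + 1))) →
      ¬ (∀ n ρ, ρ ∈ FynER (st n) → ∃ m, n ≤ m ∧ lb m = ρ) := by
  intro st lb hstep hfair
  obtain ⟨N, hN⟩ := WellFoundedLT.antitone_chain_condition
    (antitone_nat_of_succ_le (f := fun n => fynPotential (st n)) fun n => (hstep n).potential_le)
  have hloop (n : ℕ) (hn : N ≤ n) :=
    (hstep n).eq_of_potential_eq ((hN (n + 1) (by omega)).symm.trans (hN n hn))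
  have hstay (n : ℕ) (hn : N ≤ n) : st n = st N := by
    induction n, hn using Nat.le_induction with
    | base => rfl
    | succ n hn ih => exact (hloop n hn).1.trans ih
  obtain ⟨-, hflags, -⟩ := hloop N le_rfl
  have hlabel (n : ℕ) (hn : N ≤ n) : lb n = cond (st N).2.1 .no .yes := by
    rw [(hloop n hn).2.2, hstay n hn]
  obtain ⟨k, hk, hlk⟩ := hfair N (cond (st N).2.1 .yes .no) <| by
    cases (st N).2.1 <;> simp [FynER, hflags]
  rw [hlabel k hk] at hlk
  revert hlk
  cases (st N).2.1 <;> decide
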